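/- For every l ∈ ℕ and every i ∈ T with |i| ≤ l, almost surely Y_l = Π_i·[Y_{l−|i|}]_i + ∑_{k=1}^{|i|} Π_{i|_{k−1}}·Z_{l,i|_k}, where [Y_m]_j denotes the copy of Y_m built from the data of the subtree rooted at j. -/

import Mathlib

open MeasureTheory ProbabilityTheory Filter Matrix RealInnerProductSpace

noncomputable section

/-- Vectors in `ℝ^d` with the Euclidean norm. -/
abbrev Vec (d : ℕ) := EuclideanSpace ℝ (Fin d)

/-- `d × d` real matrices. -/
abbrev Mat (d : ℕ) := Matrix (Fin d) (Fin d) ℝ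

variable {d : ℕ}

instance matMeasurableSpace : MeasurableSpace (Mat d) :=
  (inferInstance : MeasurableSpace (Fin d → Fin d → ℝ))

instance matMeasureSpace : MeasureSpace (Mat d) :=
  (inferInstance : MeasureSpace (Fin d → Fin d → ℝ))

/-- Action of a matrix on a Euclidean vector. -/
def mv (a : Mat d) (x : Vec d) : Vec d := Matrix.toEuclideanLin a x

/-- Operator norm of a matrix acting on Euclidean space. -/
def opNorm (a : Mat d) : ℝ := ‖Matrix.toEuclideanCLM (𝕜 := ℝ) a‖

/-- Product of the edge weights along the path from node `j` to node `j ++ i`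
in the Ulam–Harris tree, where `An j' i'` is the weight of the edge from `j'`
to its `i'`-th child. -/
def pathProdFrom {Ω : Type} (An : List ℕ → ℕ → Ω → Mat d) (j : List ℕ) (i : List ℕ)
    (ω : Ω) : Mat d :=
  (List.ofFn (fun k : Fin i.length => An (j ++ i.take (k : ℕ)) (i.get k) ω)).prod

/-- Product of the edge weights from the root to node `i` (denoted `Π_i`). -/
def pathProd {Ω : Type} (An : List ℕ → ℕ → Ω → Mat d) (i : List ℕ) (ω : Ω) : Mat d :=
  pathProdFrom An ([]) i ω

/-- The spine `(1,1,…,1)` of length `n`. -/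
def spine (n : ℕ) : List ℕ := List.replicate n 1

/-- Longest common prefix of two nodes (denoted `i ∧ i'` in the paper). -/
def lcp : List ℕ → List ℕ → List ℕ
  | a :: as, b :: bs => if a = b then a :: lcp as bs else ([])
  | _, _ => ([])

/-- Membership of a node in the (random) tree `T` determined by the offspring
numbers `Nn`. -/
def memT {Ω : Type} (Nn : List ℕ → Ω → ℕ) (ω : Ω) (i : List ℕ) : Prop :=
  ∀ k : Fin i.length, 1 ≤ i.get k ∧ i.get k ≤ Nn (i.take (k : ℕ)) ω

/-- Codomain of the random data attached to a node: `inl j` carries the copy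
`(Q_j, (A_{ji})_i)` and `inr j` carries the copy `X_j`. -/
def copyType (d : ℕ) : List ℕ ⊕ List ℕ → Type
  | Sum.inl _ => Vec d × (ℕ → Mat d)
  | Sum.inr _ => Vec d

instance copyTypeMS (d : ℕ) : ∀ t, MeasurableSpace (copyType d t) := fun t => by
  cases t with
  | inl _ => exact (inferInstance : MeasurableSpace (Vec d × (ℕ → Mat d)))
  | inr _ => exact (inferInstance : MeasurableSpace (Vec d))

/-- The family of node data, bundled as a single family of random variables. -/
def nodeFun {Ω : Type} (Qn : List ℕ → Ω → Vec d) (An : List ℕ → ℕ → Ω → Mat d)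
    (Xn : List ℕ → Ω → Vec d) : ∀ t : List ℕ ⊕ List ℕ, Ω → copyType d t
  | Sum.inl j => fun ω => (Qn j ω, fun i => An j i ω)
  | Sum.inr j => Xn j

/-- The full setting for the multivariate smoothing transform: a probability space
carrying the random element `(Q, (A_i)_{i ≥ 1})` (with `A_0 := 0` by convention,
since indices start at `1`), i.i.d. copies `(Q_j, (A_{ji})_i)` of it and i.i.d.
copies `X_j` of a random vector `X` attached to the nodes `j` of the Ulam–Harris
tree, together with the function `k(s) = lim_n (E‖M_n ⋯ M_1‖^s)^{1/n}`, where the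
`M_i` are i.i.d. with the law `μ` of `A_1^*`. -/
structure Setup (d : ℕ) (Ω : Type) [MeasurableSpace Ω] where
  P : Measure Ω
  probP : IsProbabilityMeasure P
  Qn : List ℕ → Ω → Vec d
  An : List ℕ → ℕ → Ω → Mat d
  Xn : List ℕ → Ω → Vec d
  X : Ω → Vec d
  Nn : List ℕ → Ω → ℕ
  kFun : ℝ → ℝ
  measQn : ∀ j, Measurable (Qn j)
  measAn : ∀ j i, Measurable (An j i)
  measXn : ∀ j, Measurable (Xn j)
  measX : Measurable X
  measNn : ∀ j, Measurable (Nn j)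
  hA0 : ∀ j ω, An j 0 ω = 0
  hNmax : ∀ j ω i, Nn j ω < i → An j i ω = 0
  hNattain : ∀ j ω, Nn j ω ≠ 0 → An j (Nn j ω) ω ≠ 0
  indepCopies : iIndepFun (m := copyTypeMS d) (nodeFun Qn An Xn) P
  lawQA : ∀ j, P.map (fun ω => (Qn j ω, fun i => An j i ω))
      = P.map (fun ω => (Qn ([]) ω, fun i => An ([]) i ω))
  lawXn : ∀ j, P.map (Xn j) = P.map X
  hkFun : ∀ s : ℝ, 0 ≤ s →
    Integrable (fun ω => opNorm (An ([]) 1 ω) ^ s) P →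
    Tendsto (fun n : ℕ => (∫ ω, opNorm (pathProd An (spine n) ω) ^ s ∂P) ^ ((n : ℝ)⁻¹))
      atTop (nhds (kFun s))

attribute [instance] Setup.probP

namespace Setup

variable {Ω : Type} [MeasurableSpace Ω] (S : Setup d Ω)

/-- The law `μ` of `A_1^*`. -/
def muA : Measure (Mat d) := S.P.map (fun ω => (S.An ([]) 1 ω)ᵀ)

/-- `E[N]`. -/
def EN : ℝ := ∫ ω, (S.Nn ([]) ω : ℝ) ∂S.P

/-- `m(s) := E[N] · k(s)`. -/
def mFun (s : ℝ) : ℝ := S.EN * S.kFun s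

/-- `Π_n^* = M_n ⋯ M_1`, realized as the transpose of the weight product along
the spine of the tree (so that the `M_i` are i.i.d. with law `μ`). -/
def PiStar (n : ℕ) (ω : Ω) : Mat d := (pathProd S.An (spine n) ω)ᵀ

end Setup

namespace Setup

variable {d : ℕ} {Ω : Type} [MeasurableSpace Ω] (S : Setup d Ω)

/-- `Y_m` built from the data of the subtree rooted at `j` (denoted `[Y_m]_j`). -/
def Ysub (j : List ℕ) (m : ℕ) (ω : Ω) : Vec d :=
  (∑' i : List ℕ, if i.length < m then mv (pathProdFrom S.An j i ω) (S.Qn (j ++ i) ω) else 0)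
    + (∑' i : List ℕ, if i.length = m then mv (pathProdFrom S.An j i ω) (S.Xn (j ++ i) ω) else 0)

/-- The weighted branching process `Y_l` associated with `(Q, (A_i))` and `X`. -/
def Y (l : ℕ) (ω : Ω) : Vec d := S.Ysub ([]) l ω

/-- `Z_{l,jc} = ∑_{j' ≤ N_j, j' ≠ c} A_{jj'} [Y_{l-|j|-1}]_{jj'} + Q_j`. -/
def Zwbp (l : ℕ) (j : List ℕ) (c : ℕ) (ω : Ω) : Vec d :=
  (∑ j' ∈ (Finset.Icc 1 (S.Nn j ω)).erase c,
      mv (S.An j j' ω) (S.Ysub (j ++ [j']) (l - j.length - 1) ω))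
    + S.Qn j ω

/-- `Z` at node `j` with excluded child `c`:
`∑_{j' ≤ N_j, j' ≠ c} A_{jj'} X_{jj'} + Q_j`. -/
def Zx (j : List ℕ) (c : ℕ) (ω : Ω) : Vec d :=
  (∑ j' ∈ (Finset.Icc 1 (S.Nn j ω)).erase c, mv (S.An j j' ω) (S.Xn (j ++ [j']) ω))
    + S.Qn j ω

/-- The event `V_{i,t}` (for direction `u` and constants `C0`, `δ`). -/
def Vset (u : Vec d) (C0 δ t : ℝ) (i : List ℕ) : Set Ω :=
  {ω | t ≤ ‖mv ((pathProd S.An i ω)ᵀ) u‖ ∧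
    ∀ k : Fin i.length,
      opNorm ((pathProd S.An (i.take (k : ℕ)) ω)ᵀ) * max ‖S.Zx (i.take (k : ℕ)) (i.get k) ω‖ 1
        ≤ Real.exp (-(((i.length : ℝ) - (k : ℕ)) * δ)) * (C0 * t)}

/-- The event `W_{i,i',t}` (for direction `u` and constants `C0`, `δ`). -/
def Wset (u : Vec d) (C0 δ t : ℝ) (i i' : List ℕ) : Set Ω :=
  {ω | t < ‖mv ((pathProd S.An i ω)ᵀ) u‖ ∧ t < ‖mv ((pathProd S.An i' ω)ᵀ) u‖ ∧
    opNorm (pathProd S.An (lcp i i') ω)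
      ≤ C0 * t * Real.exp (-δ * ((i.length : ℝ) - (lcp i i').length))}

/-- The event `V_{n,t}` built from the i.i.d. sequence `(M_n, Z_n)`, where
`M_n` is the transpose of the `n`-th spine weight and `Z_n` the corresponding
`Z`-variable (excluding the spine child `1`). -/
def Vnt (u : Vec d) (C0 δ t : ℝ) (n : ℕ) : Set Ω :=
  {ω | t ≤ ‖mv (S.PiStar n ω) u‖ ∧
    ∀ k : ℕ, k < n →
      opNorm (S.PiStar k ω) * max ‖S.Zx (spine k) 1 ω‖ 1
        ≤ Real.exp (-(((n : ℝ) - k) * δ)) * (C0 * t)}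

/-- The σ-algebra generated by the shape of the tree, i.e. by the offspring
numbers `(N_j)_j`. -/
def treeSigma : MeasurableSpace Ω :=
  ⨆ j : List ℕ, MeasurableSpace.comap (S.Nn j) (inferInstance : MeasurableSpace ℕ)

end Setup

/-- `n_t := ⌈log t / ρ⌉`. -/
def ntOf (ρ t : ℝ) : ℕ := ⌈Real.log t / ρ⌉₊

/-- The set `L_t` of generations used for the sparse subtree `W`. -/
def LtSet (C1 nt : ℕ) : Set ℕ :=
  {l | C1 ∣ l ∧ (nt : ℝ) - Real.sqrt nt ≤ l ∧ (l : ℝ) < nt - Real.sqrt nt / 2}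

namespace Setup

variable {d : ℕ} {Ω : Type} [MeasurableSpace Ω] (S : Setup d Ω)

/-- The sparse (random) subtree `W ⊆ T`: nodes whose generation lies in `L_t`
and whose last `C1` entries are all equal to `1`. -/
def Wsparse (C1 nt : ℕ) (ω : Ω) : Set (List ℕ) :=
  {i | memT S.Nn ω i ∧ i.length ∈ LtSet C1 nt ∧
    ∀ k : Fin i.length, i.length - C1 ≤ (k : ℕ) → i.get k = 1}

/-- `E[∑_{i ∈ W} P(V_{i,t})]` for a random subset `W` of the tree. -/
def ESumV (u : Vec d) (C0 δ t : ℝ) (W : Ω → Set (List ℕ)) : ENNReal :=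
  ∫⁻ ω, ∑' i : List ℕ, Set.indicator (W ω) (fun i' => S.P (S.Vset u C0 δ t i')) i ∂S.P

/-- `E[∑_{i ∈ W} ∑_{i' ∈ W, |i'| ≤ |i|, i' ≠ i} P(W_{i,i',t})]` for a random
subset `W` of the tree. -/
def ESumW (u : Vec d) (C0 δ t : ℝ) (W : Ω → Set (List ℕ)) : ENNReal :=
  ∫⁻ ω, ∑' p : List ℕ × List ℕ,
    Set.indicator {p' : List ℕ × List ℕ |
        p'.1 ∈ W ω ∧ p'.2 ∈ W ω ∧ p'.2.length ≤ p'.1.length ∧ p'.2 ≠ p'.1}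
      (fun p' => S.P (S.Wset u C0 δ t p'.1 p'.2)) p ∂S.P

end Setup

/-- The number of nodes in a set of nodes, as an element of `ENNReal`. -/
def countNodes (s : Set (List ℕ)) : ENNReal :=
  ∑' i : List ℕ, Set.indicator s (fun _ => (1 : ENNReal)) i
/-- The support of a measure on matrices: points all of whose neighbourhoods
have positive measure. -/
def msupp {d : ℕ} (μm : MeasureTheory.Measure (Mat d)) : Set (Mat d) :=
  {a | ∀ U : Set (Mat d), IsOpen U → a ∈ U → μm U ≠ 0}

/-- A nonnegative matrix which has no zero row and no zero column. -/
def Allowable {d : ℕ} (a : Mat d) : Prop :=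
  (∀ r c, 0 ≤ a r c) ∧ (∀ r, ∃ c, a r c ≠ 0) ∧ (∀ c, ∃ r, a r c ≠ 0)

/-- A matrix with strictly positive entries. -/
def PosMat {d : ℕ} (a : Mat d) : Prop := ∀ r c, 0 < a r c

/-- A proximal matrix: it has an algebraically simple real eigenvalue which
strictly dominates all other (complex) eigenvalues in absolute value. -/
def Proximal {d : ℕ} (a : Mat d) : Prop :=
  ∃ lam : ℝ, Polynomial.rootMultiplicity (lam : ℂ)
      ((Matrix.charpoly a).map (algebraMap ℝ ℂ)) = 1 ∧
    ∀ z : ℂ, ((Matrix.charpoly a).map (algebraMap ℝ ℂ)).IsRoot z → z ≠ (lam : ℂ) →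
      ‖z‖ < |lam|

/-- Strong irreducibility of (the semigroup generated by the support of) `μ`:
there is no `Γ`-invariant finite union of proper nonzero subspaces. -/
def StrongIrred {d : ℕ} (μm : MeasureTheory.Measure (Mat d)) : Prop :=
  ¬ ∃ F : Finset (Submodule ℝ (Vec d)), F.Nonempty ∧ (∀ W ∈ F, W ≠ ⊥ ∧ W ≠ ⊤) ∧
    ∀ a ∈ Subsemigroup.closure (msupp μm), ∀ x ∈ ⋃ W ∈ F, (W : Set (Vec d)),
      mv a x ∈ ⋃ W ∈ F, (W : Set (Vec d))

/-- There is no `Γ`-invariant proper closed convex cone. -/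
def NoInvCone {d : ℕ} (μm : MeasureTheory.Measure (Mat d)) : Prop :=
  ¬ ∃ C : Set (Vec d), IsClosed C ∧ Convex ℝ C ∧
    (∀ r : ℝ, 0 ≤ r → ∀ x ∈ C, r • x ∈ C) ∧ C ≠ {0} ∧ C.Nonempty ∧
    C ∩ (-C) ⊆ {0} ∧ ∀ a ∈ Subsemigroup.closure (msupp μm), ∀ x ∈ C, mv a x ∈ C

/-- Condition (i-p,o): strong irreducibility, proximality, and absence of an
invariant proper closed convex cone. -/
def IPO {d : ℕ} (μm : MeasureTheory.Measure (Mat d)) : Prop :=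
  StrongIrred μm ∧ (∃ a ∈ Subsemigroup.closure (msupp μm), Proximal a) ∧ NoInvCone μm

/-- The set `S(Γ)` of logarithms of dominant eigenvalues (with nonnegative
eigenvector) of the positive matrices of the semigroup `Γ`. -/
def DomEigLog {d : ℕ} (μm : MeasureTheory.Measure (Mat d)) : Set ℝ :=
  {x | ∃ a ∈ Subsemigroup.closure (msupp μm), PosMat a ∧
    ∃ v : Vec d, v ≠ 0 ∧ (∀ i, 0 ≤ v i) ∧ mv a v = Real.exp x • v}

/-- `μ` is non-arithmetic: the additive subgroup generated by `S(Γ)` is dense. -/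
def NonArith {d : ℕ} (μm : MeasureTheory.Measure (Mat d)) : Prop :=
  Dense ((AddSubgroup.closure (DomEigLog μm) : AddSubgroup ℝ) : Set ℝ)

/-- Marker for the two geometric settings: `ga` for nonnegative matrices
(condition (C)), `gb` for invertible matrices (conditions (i-p,o) or (i-d)). -/
inductive GeoCase | ga | gb

/-- The relevant part of the unit sphere: `S^{d-1} ∩ [0,∞)^d` in case (Ga), the
whole sphere `S^{d-1}` in case (Gb). -/
def Sph (d : ℕ) : GeoCase → Set (Vec d)
  | GeoCase.ga => {x | ‖x‖ = 1 ∧ ∀ i, 0 ≤ x i}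
  | GeoCase.gb => {x | ‖x‖ = 1}

/-- The relevant cone: `[0,∞)^d` in case (Ga), all of `ℝ^d` in case (Gb). -/
def coneSpace (d : ℕ) : GeoCase → Set (Vec d)
  | GeoCase.ga => {x | ∀ i, 0 ≤ x i}
  | GeoCase.gb => Set.univ

/-- `ι(a) := inf_{x ∈ S} |ax|`. -/
def iotaS (d : ℕ) (g : GeoCase) (a : Mat d) : ℝ :=
  sInf ((fun x => ‖mv a x‖) '' Sph d g)

namespace Setup

variable {d : ℕ} {Ω : Type} [MeasurableSpace Ω] (S : Setup d Ω)

/-- Condition (i-d): the projective chain can reach every open set of the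
sphere, and some power of `Π_n^*` has a density component. -/
def IDcond : Prop :=
  (∀ B : Set (Vec d), IsOpen B → ∀ x : Vec d, ‖x‖ = 1 → (∃ y ∈ B, ‖y‖ = 1) →
    ∃ n : ℕ, S.P {ω | (‖mv (S.PiStar n ω) x‖)⁻¹ • mv (S.PiStar n ω) x ∈ B} ≠ 0) ∧
  (∃ m0 : Mat d, IsUnit m0 ∧ ∃ dl : ℝ, 0 < dl ∧ ∃ c : ℝ, 0 < c ∧ ∃ n0 : ℕ,
    ∀ E : Set (Mat d), MeasurableSet E →
      ENNReal.ofReal c * MeasureTheory.volume (E ∩ {m : Mat d | opNorm (m - m0) < dl})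
        ≤ S.P.map (S.PiStar n0) E)

/-- Geometric assumption (Ga): nonnegative allowable matrices, a strictly
positive matrix in the semigroup, non-arithmeticity; `Q` is nonnegative too. -/
def GaCond : Prop :=
  (∀ᵐ ω ∂S.P, (∀ l, 0 ≤ S.Qn ([]) ω l) ∧ ∀ i r c, 0 ≤ S.An ([]) i ω r c) ∧
  (∀ a ∈ msupp S.muA, Allowable a) ∧
  (∃ a ∈ Subsemigroup.closure (msupp S.muA), PosMat a) ∧
  NonArith S.muA

/-- Geometric assumption (Gb): invertible matrices satisfying (i-p,o) or (i-d). -/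
def GbCond : Prop :=
  (∀ᵐ ω ∂S.P, ∀ i, 1 ≤ i → i ≤ S.Nn ([]) ω → IsUnit (S.An ([]) i ω)) ∧
  (IPO S.muA ∨ S.IDcond)

/-- The geometric assumption corresponding to the case marker. -/
def GeoH : GeoCase → Prop
  | GeoCase.ga => S.GaCond
  | GeoCase.gb => S.GbCond

/-- Case (N-random): `1 < E[N] < ∞`; conditioned upon `N`, the matrices
`(A_i)_{i=1}^N` are i.i.d. (with the law of `A_1`), and `Q` is independent of
`(N, (A_i)_{i ≥ 1})`. -/
def NRandom : Prop :=
  MeasureTheory.Integrable (fun ω => (S.Nn ([]) ω : ℝ)) S.P ∧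
  1 < S.EN ∧
  (∀ n : ℕ, S.P {ω | S.Nn ([]) ω = n} ≠ 0 →
    ProbabilityTheory.iIndepFun (m := fun _ : Fin n => matMeasurableSpace)
      (fun i ω => S.An ([]) ((i : ℕ) + 1) ω)
      (ProbabilityTheory.cond S.P {ω | S.Nn ([]) ω = n}) ∧
    ∀ i : Fin n,
      (ProbabilityTheory.cond S.P {ω | S.Nn ([]) ω = n}).map (S.An ([]) ((i : ℕ) + 1))
        = S.P.map (S.An ([]) 1)) ∧
  ProbabilityTheory.IndepFun (S.Qn ([]))
    (fun ω => (S.Nn ([]) ω, fun i => S.An ([]) i ω)) S.P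

/-- Case (N-fixed): `N ≥ 2` is constant, the supports of the `A_i` are bounded,
and `(A_i)_{i=1}^N` are exchangeable (hence identically distributed). -/
def NFixed : Prop :=
  ∃ n : ℕ, 2 ≤ n ∧ (∀ ω, S.Nn ([]) ω = n) ∧
    (∃ c : ℝ, ∀ᵐ ω ∂S.P, ∀ i, opNorm (S.An ([]) i ω) ≤ c) ∧
    ∀ σ : Equiv.Perm (Fin n),
      S.P.map (fun ω (i : Fin n) => S.An ([]) ((i : ℕ) + 1) ω)
        = S.P.map (fun ω (i : Fin n) => S.An ([]) (((σ i : Fin n) : ℕ) + 1) ω)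

/-- Moment assumptions (M1): `0 < α < β`, `m(α) = m(β) = 1`,
`E|Q|^{β+ε} < ∞` and `E[‖A_1^*‖^{β+ε} ι(A_1^*)^{-ε}] < ∞`. -/
def M1 (g : GeoCase) (α β ε : ℝ) : Prop :=
  0 < α ∧ α < β ∧ 0 < ε ∧ S.mFun α = 1 ∧ S.mFun β = 1 ∧
  MeasureTheory.Integrable (fun ω => ‖S.Qn ([]) ω‖ ^ (β + ε)) S.P ∧
  MeasureTheory.Integrable
    (fun ω => opNorm ((S.An ([]) 1 ω)ᵀ) ^ (β + ε) * iotaS d g ((S.An ([]) 1 ω)ᵀ) ^ (-ε)) S.P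

/-- `X` is a fixed point of the multivariate smoothing transform:
`X` has the same law as `∑_{i=1}^N A_i X_i + Q`, where the `X_i = X_{(i)}` are
the i.i.d. copies of `X` attached to the first generation, independent of
`(Q, (A_i))`. -/
def FixedPoint : Prop :=
  S.P.map S.X
    = S.P.map (fun ω =>
        (∑ i ∈ Finset.Icc 1 (S.Nn ([]) ω), mv (S.An ([]) i ω) (S.Xn ([i]) ω)) + S.Qn ([]) ω)

/-- Moment assumption (M2): `X` is a nondegenerate fixed point with
`E|X|^s < ∞` for all `s < β`. -/
def M2 (β : ℝ) : Prop :=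
  S.FixedPoint ∧ (¬ ∃ c : Vec d, ∀ᵐ ω ∂S.P, S.X ω = c) ∧
  ∀ s : ℝ, 0 ≤ s → s < β → MeasureTheory.Integrable (fun ω => ‖S.X ω‖ ^ s) S.P

end Setup

/-! The identity holds for every `ω`, not only almost surely: unroll the branching recursion
`[Y_{m+1}]_j = ∑_{c ≤ N_j} A_{jc} [Y_m]_{jc} + Q_j` along the path to `i`, keeping at each node
the child on the path; the other children together with `Q_j` make up `Z`. The infinite sums
defining `Y` are finite, since for fixed `ω` only finitely many nodes of bounded depth carry a
nonzero weight product. -/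

section MatrixAction

@[simp]
lemma one_mv (x : Vec d) : mv 1 x = x := by
  simp [mv]

@[simp]
lemma zero_mv (x : Vec d) : mv 0 x = 0 := by simp [mv]

@[simp]
lemma mv_zero (a : Mat d) : mv a 0 = 0 := by simp [mv]

lemma mul_mv (a b : Mat d) (x : Vec d) : mv (a * b) x = mv a (mv b x) := by
  simp [mv, Matrix.toLpLin_apply, Matrix.mulVec_mulVec]

lemma mv_add (a : Mat d) (x y : Vec d) : mv a (x + y) = mv a x + mv a y := by simp [mv]

lemma mv_sum {α : Type*} (a : Mat d) (s : Finset α) (f : α → Vec d) :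
    mv a (∑ k ∈ s, f k) = ∑ k ∈ s, mv a (f k) := by simp [mv]

lemma mv_tsum {α : Type*} (a : Mat d) {f : α → Vec d} (hf : Summable f) :
    mv a (∑' i, f i) = ∑' i, mv a (f i) :=
  (Matrix.toEuclideanLin a).toContinuousLinearMap.map_tsum hf

end MatrixAction

section Tree

variable {Ω : Type}

@[simp]
lemma pathProdFrom_nil (An : List ℕ → ℕ → Ω → Mat d) (j : List ℕ) (ω : Ω) :
    pathProdFrom An j [] ω = 1 := by simp [pathProdFrom]

lemma pathProdFrom_cons (An : List ℕ → ℕ → Ω → Mat d) (j : List ℕ) (c : ℕ) (i : List ℕ)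
    (ω : Ω) : pathProdFrom An j (c :: i) ω = An j c ω * pathProdFrom An (j ++ [c]) i ω := by
  simp [pathProdFrom, List.ofFn_succ, List.take_succ_cons, List.append_assoc]

lemma pathProdFrom_eq_zero (An : List ℕ → ℕ → Ω → Mat d) {j i : List ℕ} {ω : Ω}
    (k : Fin i.length) (h : An (j ++ i.take k) (i.get k) ω = 0) :
    pathProdFrom An j i ω = 0 :=
  List.prod_eq_zero (List.mem_ofFn.mpr ⟨k, h⟩)

lemma memT_cons {Nn : List ℕ → Ω → ℕ} {ω : Ω} {c : ℕ} {i : List ℕ} :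
    memT Nn ω (c :: i) ↔ (1 ≤ c ∧ c ≤ Nn [] ω) ∧ memT (fun l => Nn (c :: l)) ω i := by
  simp [memT, Fin.forall_fin_succ, List.take_succ_cons]

lemma finite_setOf_length_le_get_le (m : ℕ) (B : List ℕ → ℕ) :
    {i : List ℕ | i.length ≤ m ∧ ∀ k : Fin i.length, i.get k ≤ B (i.take k)}.Finite := by
  induction m generalizing B with
  | zero =>
    refine (Set.finite_singleton []).subset fun i ⟨hlen, _⟩ => ?_
    simpa [List.length_eq_zero_iff] using hlen
  | succ m ih =>
    refine (((Set.finite_Iic (B [])).biUnion fun c _ => (ih fun l => B (c :: l)).image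
      (List.cons c)).insert []).subset ?_
    rintro (_ | ⟨c, i⟩) ⟨hlen, hget⟩
    · exact Set.mem_insert _ _
    · simp only [List.length_cons, Fin.forall_fin_succ, List.get_eq_getElem, Fin.val_zero,
        List.getElem_cons_zero, List.take_zero, Fin.val_succ, List.getElem_cons_succ,
        List.take_succ_cons] at hlen hget
      exact Set.mem_insert_of_mem _ (Set.mem_biUnion hget.1 ⟨i, ⟨by omega, hget.2⟩, rfl⟩)

lemma tsum_list_eq_nil_add_tsum_cons {α E : Type*} [DecidableEq α] [NormedAddCommGroup E]
    [CompleteSpace E] {f : List α → E} (hf : Summable f) :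
    ∑' i, f i = f [] + ∑' c, ∑' i, f (c :: i) := by
  have hcons : Function.Injective fun p : α × List α => p.1 :: p.2 :=
    fun _ _ h => Prod.ext (List.cons.inj h).1 (List.cons.inj h).2
  have hrest : ∑' i, (if i = [] then 0 else f i) = ∑' p : α × List α, f (p.1 :: p.2) := by
    rw [← hcons.tsum_eq]
    · exact tsum_congr fun p => if_neg (List.cons_ne_nil _ _)
    · rintro (_ | ⟨c, i⟩) hi
      · simp at hi
      · exact ⟨(c, i), rfl⟩
  rw [hf.tsum_eq_add_tsum_ite [], hrest]
  exact congrArg (f [] + ·) (hf.comp_injective hcons).tsum_prod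

end Tree

namespace Setup

variable {Ω : Type} [MeasurableSpace Ω] (S : Setup d Ω)

lemma An_eq_zero_of_notMem (j : List ℕ) (ω : Ω) {c : ℕ} (hc : c ∉ Finset.Icc 1 (S.Nn j ω)) :
    S.An j c ω = 0 := by
  rcases Nat.eq_zero_or_pos c with rfl | hc0
  · exact S.hA0 j ω
  · rw [Finset.mem_Icc, not_and, not_le] at hc
    exact S.hNmax j ω c (hc hc0)

/-- The sum of `Π_{j,ji} V_{ji}` over the nodes `ji` below `j` whose relative depth `|i|`
satisfies `p`; `[Y_m]_j` is the sum of two of them. -/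
def levelSum (V : List ℕ → Ω → Vec d) (p : ℕ → Prop) [DecidablePred p] (j : List ℕ)
    (ω : Ω) : Vec d :=
  ∑' i : List ℕ, if p i.length then mv (pathProdFrom S.An j i ω) (V (j ++ i) ω) else 0

lemma Ysub_eq_levelSum (j : List ℕ) (m : ℕ) (ω : Ω) :
    S.Ysub j m ω = S.levelSum S.Qn (· < m) j ω + S.levelSum S.Xn (· = m) j ω := rfl

variable {S}

lemma summable_levelSum_term {V : List ℕ → Ω → Vec d} {p : ℕ → Prop} [DecidablePred p]
    {m : ℕ} (hp : ∀ n, p n → n ≤ m) (j : List ℕ) (ω : Ω) :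
    Summable fun i : List ℕ =>
      if p i.length then mv (pathProdFrom S.An j i ω) (V (j ++ i) ω) else 0 := by
  refine summable_of_hasFiniteSupport
    ((finite_setOf_length_le_get_le m fun l => S.Nn (j ++ l) ω).subset fun i hi => ?_)
  by_contra hout
  refine hi ?_
  dsimp only
  split_ifs with hpi
  · have ⟨k, hk⟩ : ∃ k : Fin i.length, S.Nn (j ++ i.take k) ω < i.get k := by
      simpa [hp _ hpi] using hout
    rw [pathProdFrom_eq_zero S.An k (S.hNmax _ _ _ hk), zero_mv]
  · rfl

lemma levelSum_eq_add_sum {V : List ℕ → Ω → Vec d} {p q : ℕ → Prop} [DecidablePred p]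
    [DecidablePred q] {m : ℕ} (hp : ∀ n, p n → n ≤ m) (hq : ∀ n, p (n + 1) ↔ q n)
    (j : List ℕ) (ω : Ω) :
    S.levelSum V p j ω = (if p 0 then V j ω else 0)
      + ∑ c ∈ Finset.Icc 1 (S.Nn j ω), mv (S.An j c ω) (S.levelSum V q (j ++ [c]) ω) := by
  have hchild : ∀ c, ∑' i : List ℕ, (if p (c :: i).length then
        mv (pathProdFrom S.An j (c :: i) ω) (V (j ++ c :: i) ω) else 0)
      = mv (S.An j c ω) (S.levelSum V q (j ++ [c]) ω) := by
    intro c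
    rw [levelSum, mv_tsum _ (summable_levelSum_term (m := m) (fun n hn => ?_) _ ω)]
    · refine tsum_congr fun i => ?_
      simp only [List.length_cons, hq]
      split_ifs <;> simp [pathProdFrom_cons, mul_mv]
    · have := hp _ ((hq n).mpr hn)
      omega
  rw [levelSum, tsum_list_eq_nil_add_tsum_cons (summable_levelSum_term hp j ω), tsum_congr hchild,
    tsum_eq_sum fun c hc => by rw [S.An_eq_zero_of_notMem j ω hc, zero_mv]]
  simp

lemma Ysub_succ (j : List ℕ) (m : ℕ) (ω : Ω) :
    S.Ysub j (m + 1) ω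
      = (∑ c ∈ Finset.Icc 1 (S.Nn j ω), mv (S.An j c ω) (S.Ysub (j ++ [c]) m ω)) + S.Qn j ω := by
  rw [Ysub_eq_levelSum,
    levelSum_eq_add_sum (q := (· < m)) (fun _ => le_of_lt) (fun _ => Nat.add_lt_add_iff_right),
    levelSum_eq_add_sum (q := (· = m)) (fun _ => le_of_eq) (fun _ => Nat.add_right_cancel_iff)]
  simp only [Ysub_eq_levelSum, mv_add, Finset.sum_add_distrib, if_pos m.succ_pos,
    if_neg m.succ_ne_zero.symm, zero_add]
  abel

lemma Ysub_eq_mv_add_Zwbp {l : ℕ} {j : List ℕ} (hj : j.length < l) {c : ℕ} {ω : Ω}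
    (hc : c ∈ Finset.Icc 1 (S.Nn j ω)) :
    S.Ysub j (l - j.length) ω
      = mv (S.An j c ω) (S.Ysub (j ++ [c]) (l - (j ++ [c]).length) ω) + S.Zwbp l j c ω := by
  obtain ⟨m, hm⟩ : ∃ m, l - j.length = m + 1 := ⟨l - j.length - 1, by omega⟩
  have hm' : l - (j ++ [c]).length = m := by simp; omega
  rw [hm, Ysub_succ, hm', Zwbp, ← Finset.add_sum_erase _ _ hc,
    show l - j.length - 1 = m by omega]
  abel

theorem Ysub_eq_pathProdFrom_add_sum_Zwbp (l : ℕ) (ω : Ω) (i : List ℕ) :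
    ∀ j : List ℕ, j.length + i.length ≤ l → memT (fun l' => S.Nn (j ++ l')) ω i →
      S.Ysub j (l - j.length) ω
        = mv (pathProdFrom S.An j i ω) (S.Ysub (j ++ i) (l - (j ++ i).length) ω)
          + ∑ k : Fin i.length,
              mv (pathProdFrom S.An j (i.take k) ω) (S.Zwbp l (j ++ i.take k) (i.get k) ω) := by
  induction i with
  | nil => intro j _ _; simp
  | cons c i ih =>
    intro j hlen hmem
    rw [memT_cons] at hmem
    have hc : c ∈ Finset.Icc 1 (S.Nn j ω) := by simpa using hmem.1
    have hlen' : (j ++ [c]).length + i.length ≤ l := by simp at hlen ⊢; omega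
    have hmem' : memT (fun l' => S.Nn (j ++ [c] ++ l')) ω i := by simpa using hmem.2
    rw [Ysub_eq_mv_add_Zwbp (by simp at hlen; omega) hc, ih _ hlen' hmem']
    simp only [List.append_assoc, List.cons_append, List.nil_append, List.length_append,
      List.length_cons, List.get_eq_getElem, mv_add, mv_sum, pathProdFrom_cons, mul_mv,
      Fin.sum_univ_succ, Fin.coe_ofNat_eq_mod, Nat.zero_mod, List.take_zero, pathProdFrom_nil,
      List.append_nil, List.getElem_cons_zero, one_mv, Fin.val_succ, List.take_succ_cons,
      List.getElem_cons_succ]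
    abel

end Setup

/-- the almost sure decomposition of the weighted branching
process along the path to a node `i ∈ T` with `|i| ≤ l`:
`Y_l = Π_i [Y_{l−|i|}]_i + ∑_{k=1}^{|i|} Π_{i|_{k−1}} Z_{l,i|_k}`. -/
theorem wbp_decomposition {d : ℕ} {Ω : Type} [MeasurableSpace Ω] (S : Setup d Ω) :
    ∀ l : ℕ, ∀ i : List ℕ, i.length ≤ l →
      ∀ᵐ ω ∂S.P, memT S.Nn ω i →
        S.Y l ω
          = mv (pathProd S.An i ω) (S.Ysub i (l - i.length) ω)
            + ∑ k : Fin i.length,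
                mv (pathProd S.An (i.take (k : ℕ)) ω)
                  (S.Zwbp l (i.take (k : ℕ)) (i.get k) ω) := by
  intro l i hlen
  refine Filter.Eventually.of_forall fun ω hmem => ?_
  simpa [Setup.Y, pathProd] using S.Ysub_eq_pathProdFrom_add_sum_Zwbp l ω i [] (by simpa) hmem

end
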